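/- For γ, N ∈ [0,1], define the generalized amplitude damping channel A_{γ,N}(ρ) := Σ_{i=1}^4 A_i ρ A_i† on M₂, with Kraus operators A₁ := √(1−N)·(|0⟩⟨0| + √(1−γ)·|1⟩⟨1|), A₂ := √(γ(1−N))·|0⟩⟨1|, A₃ := √N·(√(1−γ)·|0⟩⟨0| + |1⟩⟨1|), and A₄ := √(γN)·|1⟩⟨0|. Let Φ be the qubit maximally entangled state on ℂ²⊗ℂ². Then Tr[(Φ⊗Φ)·(A_{γ,N}⊗A_{γ,N}⊗A_{γ,N}⊗A_{γ,N})(Φ⊗Φ)] = (1 + (γ/2)·(γ − 2·(1 + γN(1−N))))², where Φ⊗Φ is regarded as a state on (ℂ²)^{⊗4} with the maximally entangled pairs on factors (1,2) and (3,4), and A_{γ,N}⊗A_{γ,N}⊗A_{γ,N}⊗A_{γ,N} denotes the channel acting as A_{γ,N} independently on each of the four qubit factors. -/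

import Mathlib

/-!
After reassociating the four qubits, `Φ ⊗ Φ` is a Kronecker product and the Kraus operators of
the four-fold channel are Kronecker products of Kraus operators of `A_{γ,N} ⊗ A_{γ,N}`, so the
overlap factorises as `Tr[Φ (A_{γ,N} ⊗ A_{γ,N})(Φ)]²`. For a single pair,
`⟨Φ| K ⊗ L |Φ⟩ = Tr(K Lᵀ) / 2`, so that overlap is `Σ_{i,j} |Tr(A_i A_jᵀ)|² / 4`; only the pairs
of diagonal Kraus operators and the pairs `(A₂, A₂)`, `(A₄, A₄)` contribute.
-/

open Matrix Kronecker
open scoped ComplexOrder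

noncomputable section

/-- The positive semidefinite square root of a positive semidefinite matrix
(Mathlib's former `Matrix.PosSemidef.sqrt`, with its former definition). -/
def Matrix.PosSemidef.sqrt {n 𝕜 : Type*} [Fintype n] [DecidableEq n] [RCLike 𝕜]
    {A : Matrix n n 𝕜} (hA : A.PosSemidef) : Matrix n n 𝕜 :=
  hA.1.eigenvectorUnitary.1 * diagonal ((↑) ∘ (√·) ∘ hA.1.eigenvalues) *
    (star hA.1.eigenvectorUnitary : Matrix n n 𝕜)

/-- The trace norm `‖X‖₁ = Tr[√(X†X)]`. -/
def traceNorm {n : Type*} [Fintype n] [DecidableEq n] (X : Matrix n n ℂ) : ℝ :=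
  ((Matrix.posSemidef_conjTranspose_mul_self X).sqrt.trace).re

/-- The extension `id_k ⊗ Φ` of a map on matrices, with the identity on the first factor. -/
def idTensor {k n m : Type*} (Φ : Matrix n n ℂ → Matrix m m ℂ)
    (M : Matrix (k × n) (k × n) ℂ) : Matrix (k × m) (k × m) ℂ :=
  Matrix.of fun p q => Φ (Matrix.of fun a b => M (p.1, a) (q.1, b)) p.2 q.2

/-- A density matrix: positive semidefinite with unit trace. -/
def IsState {n : Type*} [Fintype n] (ρ : Matrix n n ℂ) : Prop :=
  ρ.PosSemidef ∧ ρ.trace = 1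

/-- Normalized diamond distance between two maps on matrices, as the supremum over
bipartite input states (with a reference system of the same dimension as the input)
of the normalized trace distance of the outputs. -/
def dDist {n m : Type*} [Fintype n] [DecidableEq n] [Fintype m] [DecidableEq m]
    (N M : Matrix n n ℂ → Matrix m m ℂ) : ℝ :=
  sSup {x : ℝ | ∃ ρ : Matrix (n × n) (n × n) ℂ, IsState ρ ∧
    x = (1 / 2) * traceNorm (idTensor N ρ - idTensor M ρ)}

/-- Complete positivity of a linear map on matrices: every finite identity extension
preserves positive semidefiniteness. -/
def IsCP {n m : Type*} [Fintype n] [DecidableEq n] [Fintype m] [DecidableEq m]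
    (Φ : Matrix n n ℂ →ₗ[ℂ] Matrix m m ℂ) : Prop :=
  ∀ (r : ℕ) (M : Matrix (Fin r × n) (Fin r × n) ℂ), M.PosSemidef →
    (idTensor (fun X => Φ X) M).PosSemidef

/-- Trace preservation of a linear map on matrices. -/
def IsTP {n m : Type*} [Fintype n] [Fintype m]
    (Φ : Matrix n n ℂ →ₗ[ℂ] Matrix m m ℂ) : Prop :=
  ∀ X, (Φ X).trace = X.trace

/-- Choi operator of a map on matrices: `Γ^Φ = Σ_{i,j} |i⟩⟨j| ⊗ Φ(|i⟩⟨j|)`. -/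
def choi {n m : Type*} [DecidableEq n]
    (Φ : Matrix n n ℂ → Matrix m m ℂ) : Matrix (n × m) (n × m) ℂ :=
  Matrix.of fun p q => Φ (Matrix.single p.1 q.1 1) p.2 q.2

/-- The swap operator `F = Σ_{i,j} |i⟩⟨j| ⊗ |j⟩⟨i|` on `ℂ^d ⊗ ℂ^d`. -/
def swapOp (d : ℕ) : Matrix (Fin d × Fin d) (Fin d × Fin d) ℂ :=
  Matrix.of fun p q => if p.1 = q.2 ∧ p.2 = q.1 then 1 else 0

/-- The swap channel `S^d(X) = F X F†`. -/
def swapCh (d : ℕ) (X : Matrix (Fin d × Fin d) (Fin d × Fin d) ℂ) :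
    Matrix (Fin d × Fin d) (Fin d × Fin d) ℂ :=
  swapOp d * X * (swapOp d)ᴴ

/-- Square root of a positive semidefinite matrix (junk value `0` otherwise). -/
def msqrt {n : Type*} [Fintype n] [DecidableEq n] (X : Matrix n n ℂ) : Matrix n n ℂ :=
  letI := Classical.propDecidable X.PosSemidef
  if h : X.PosSemidef then h.sqrt else 0

/-- Fidelity `F(ω,τ) = ‖√ω √τ‖₁²`. -/
def fid {n : Type*} [Fintype n] [DecidableEq n] (ω τ : Matrix n n ℂ) : ℝ :=
  (traceNorm (msqrt ω * msqrt τ)) ^ 2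

/-- Channel fidelity: the infimum of output fidelities over bipartite input states. -/
def cFid {n m : Type*} [Fintype n] [DecidableEq n] [Fintype m] [DecidableEq m]
    (N M : Matrix n n ℂ → Matrix m m ℂ) : ℝ :=
  sInf {x : ℝ | ∃ ρ : Matrix (n × n) (n × n) ℂ, IsState ρ ∧
    x = fid (idTensor N ρ) (idTensor M ρ)}

/-- Partial trace over the second (right) factor. -/
def ptrR {a b : Type*} [Fintype b] (X : Matrix (a × b) (a × b) ℂ) : Matrix a a ℂ :=
  Matrix.of fun i j => ∑ k, X (i, k) (j, k)

/-- Unnormalized maximally entangled operator `Γ = |Γ⟩⟨Γ|` on `ℂ^D ⊗ ℂ^D`. -/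
def gamOp (D : ℕ) : Matrix (Fin D × Fin D) (Fin D × Fin D) ℂ :=
  Matrix.of fun p q => if p.1 = p.2 ∧ q.1 = q.2 then 1 else 0

/-- Maximally entangled state `Φ = Γ/D` on `ℂ^D ⊗ ℂ^D`. -/
def phiD (D : ℕ) : Matrix (Fin D × Fin D) (Fin D × Fin D) ℂ :=
  ((D : ℂ))⁻¹ • gamOp D

/-- Partial transpose over Bob's factors `B, B̂, B'` of a matrix on the six factors
`(A ⊗ B) ⊗ (Â ⊗ B̂) ⊗ (A' ⊗ B')`. -/
def ptB6 {A B AH BH A' B' : Type*}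
    (X : Matrix (((A × B) × (AH × BH)) × (A' × B')) (((A × B) × (AH × BH)) × (A' × B')) ℂ) :
    Matrix (((A × B) × (AH × BH)) × (A' × B')) (((A × B) × (AH × BH)) × (A' × B')) ℂ :=
  Matrix.of fun p q =>
    X (((p.1.1.1, q.1.1.2), (p.1.2.1, q.1.2.2)), (p.2.1, q.2.2))
      (((q.1.1.1, p.1.1.2), (q.1.2.1, p.1.2.2)), (q.2.1, p.2.2))

/-- Partial transpose over the factor `B̂` of a matrix on `Â ⊗ B̂`. -/
def ptBh2 {AH BH : Type*} (X : Matrix (AH × BH) (AH × BH) ℂ) : Matrix (AH × BH) (AH × BH) ℂ :=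
  Matrix.of fun g g' => X (g.1, g'.2) (g'.1, g.2)

/-- Contraction `Tr_{ÂB̂}[(T_{ÂB̂}(ρ) ⊗ I) P]` of a six-factor operator with a resource state,
yielding the Choi operator of the induced channel `ω ↦ P(ω ⊗ ρ)`. -/
def contractRes {A B AH BH A' B' : Type*} [Fintype AH] [Fintype BH]
    (ρ : Matrix (AH × BH) (AH × BH) ℂ)
    (P : Matrix (((A × B) × (AH × BH)) × (A' × B')) (((A × B) × (AH × BH)) × (A' × B')) ℂ) :
    Matrix ((A × B) × (A' × B')) ((A × B) × (A' × B')) ℂ :=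
  Matrix.of fun p q => ∑ h, ∑ h', ρ h h' * P ((p.1, h), p.2) ((q.1, h'), q.2)


/-- The qubit maximally entangled state `Φ = Γ/2`. -/
def phiQ : Matrix (Fin 2 × Fin 2) (Fin 2 × Fin 2) ℂ := (2 : ℂ)⁻¹ • gamOp 2

/-- `|i⟩⟨j|` on a qubit. -/
def ketbra (i j : Fin 2) : Matrix (Fin 2) (Fin 2) ℂ := Matrix.single i j 1

/-- Kraus operators of the generalized amplitude damping channel. -/
def gadcKraus (γ N : ℝ) : Fin 4 → Matrix (Fin 2) (Fin 2) ℂ :=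
  ![(Real.sqrt (1 - N) : ℂ) • (ketbra 0 0 + (Real.sqrt (1 - γ) : ℂ) • ketbra 1 1),
    (Real.sqrt (γ * (1 - N)) : ℂ) • ketbra 0 1,
    (Real.sqrt N : ℂ) • ((Real.sqrt (1 - γ) : ℂ) • ketbra 0 0 + ketbra 1 1),
    (Real.sqrt (γ * N) : ℂ) • ketbra 1 0]

/-- The generalized amplitude damping channel `A_{γ,N}(ρ) = Σ_i A_i ρ A_i†`. -/
def gadc (γ N : ℝ) (ρ : Matrix (Fin 2) (Fin 2) ℂ) : Matrix (Fin 2) (Fin 2) ℂ :=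
  ∑ i : Fin 4, gadcKraus γ N i * ρ * (gadcKraus γ N i)ᴴ

/-- The channel `A_{γ,N} ⊗ A_{γ,N} ⊗ A_{γ,N} ⊗ A_{γ,N}` acting independently on each of
the four qubit factors, given by the tensor products of the Kraus operators. -/
def gadc4 (γ N : ℝ)
    (X : Matrix (Fin 2 × Fin 2 × Fin 2 × Fin 2) (Fin 2 × Fin 2 × Fin 2 × Fin 2) ℂ) :
    Matrix (Fin 2 × Fin 2 × Fin 2 × Fin 2) (Fin 2 × Fin 2 × Fin 2 × Fin 2) ℂ :=
  ∑ i : Fin 4 × Fin 4 × Fin 4 × Fin 4,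
    (gadcKraus γ N i.1 ⊗ₖ (gadcKraus γ N i.2.1 ⊗ₖ (gadcKraus γ N i.2.2.1 ⊗ₖ
      gadcKraus γ N i.2.2.2))) * X *
    (gadcKraus γ N i.1 ⊗ₖ (gadcKraus γ N i.2.1 ⊗ₖ (gadcKraus γ N i.2.2.1 ⊗ₖ
      gadcKraus γ N i.2.2.2)))ᴴ

/-- `Φ ⊗ Φ` on `(ℂ²)^{⊗4}`, with the maximally entangled pairs on factors `(1,2)`
and `(3,4)`. -/
def phiPhi : Matrix (Fin 2 × Fin 2 × Fin 2 × Fin 2) (Fin 2 × Fin 2 × Fin 2 × Fin 2) ℂ :=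
  Matrix.of fun r c =>
    phiQ (r.1, r.2.1) (c.1, c.2.1) * phiQ (r.2.2.1, r.2.2.2) (c.2.2.1, c.2.2.2)

theorem Matrix.sum_kronecker_sum {ι κ l m n p α : Type*} [Fintype ι] [Fintype κ]
    [NonUnitalNonAssocSemiring α] (A : ι → Matrix l m α) (B : κ → Matrix n p α) :
    (∑ i, A i) ⊗ₖ (∑ j, B j) = ∑ x : ι × κ, A x.1 ⊗ₖ B x.2 := by
  ext
  simp [sum_apply, Finset.sum_mul_sum, Fintype.sum_prod_type]

theorem Matrix.trace_submatrix_equiv {m n α : Type*} [Fintype m] [Fintype n] [AddCommMonoid α]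
    (A : Matrix n n α) (e : m ≃ n) : (A.submatrix e e).trace = A.trace :=
  e.sum_comp fun i => A i i

def krausMap {ι m n : Type*} [Fintype ι] [Fintype n] (K : ι → Matrix m n ℂ)
    (X : Matrix n n ℂ) : Matrix m m ℂ :=
  ∑ i, K i * X * (K i)ᴴ

section krausMap

variable {ι κ m n m' n' : Type*} [Fintype ι] [Fintype κ] [Fintype n] [Fintype n']

theorem krausMap_comp_equiv (K : ι → Matrix m n ℂ) (e : κ ≃ ι) :
    krausMap (K ∘ e) = krausMap K :=
  funext fun X => e.sum_comp fun i => K i * X * (K i)ᴴ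

theorem krausMap_submatrix (K : ι → Matrix m n ℂ) (X : Matrix n n ℂ) (e : m' ≃ m)
    (f : n' ≃ n) :
    krausMap (fun i => (K i).submatrix e f) (X.submatrix f f) = (krausMap K X).submatrix e e := by
  ext
  simp [krausMap, Matrix.sum_apply, conjTranspose_submatrix, submatrix_mul_equiv]

theorem krausMap_kronecker {p q : Type*} [Fintype q] (K : ι → Matrix m n ℂ)
    (L : κ → Matrix p q ℂ) (X : Matrix n n ℂ) (Y : Matrix q q ℂ) :
    krausMap (fun x : ι × κ => K x.1 ⊗ₖ L x.2) (X ⊗ₖ Y) = krausMap K X ⊗ₖ krausMap L Y := by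
  simp only [krausMap, sum_kronecker_sum, conjTranspose_kronecker, mul_kronecker_mul]

end krausMap

theorem trace_phiQ_mul_kronecker_conj (K L : Matrix (Fin 2) (Fin 2) ℂ) :
    (phiQ * ((K ⊗ₖ L) * phiQ * (K ⊗ₖ L)ᴴ)).trace
      = (K * Lᵀ).trace * star (K * Lᵀ).trace / 4 := by
  simp [trace, Matrix.mul_apply, phiQ, gamOp, Fintype.sum_prod_type, Fin.sum_univ_two]
  ring

abbrev qubitPairsAssoc : (Fin 2 × Fin 2) × (Fin 2 × Fin 2) ≃ Fin 2 × Fin 2 × Fin 2 × Fin 2 :=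
  Equiv.prodAssoc _ _ _

theorem phiPhi_eq_submatrix_kronecker :
    phiPhi = (phiQ ⊗ₖ phiQ).submatrix qubitPairsAssoc.symm qubitPairsAssoc.symm := by
  ext
  simp [phiPhi]

theorem gadc4_eq_krausMap (γ N : ℝ) :
    gadc4 γ N = krausMap fun x : (Fin 4 × Fin 4) × (Fin 4 × Fin 4) =>
      ((gadcKraus γ N x.1.1 ⊗ₖ gadcKraus γ N x.1.2) ⊗ₖ
        (gadcKraus γ N x.2.1 ⊗ₖ gadcKraus γ N x.2.2)).submatrix
        qubitPairsAssoc.symm qubitPairsAssoc.symm := by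
  rw [← krausMap_comp_equiv _ (Equiv.prodAssoc (Fin 4) (Fin 4) (Fin 4 × Fin 4)).symm]
  funext X
  simp [gadc4, krausMap]

theorem gadc4_phiPhi (γ N : ℝ) :
    gadc4 γ N phiPhi =
      (krausMap (fun x : Fin 4 × Fin 4 => gadcKraus γ N x.1 ⊗ₖ gadcKraus γ N x.2) phiQ ⊗ₖ
        krausMap (fun x : Fin 4 × Fin 4 => gadcKraus γ N x.1 ⊗ₖ gadcKraus γ N x.2) phiQ).submatrix
        qubitPairsAssoc.symm qubitPairsAssoc.symm := by
  rw [gadc4_eq_krausMap, phiPhi_eq_submatrix_kronecker, krausMap_submatrix, ← krausMap_kronecker]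

theorem trace_phiQ_mul_krausMap_kronecker {ι κ : Type*} [Fintype ι] [Fintype κ]
    (K : ι → Matrix (Fin 2) (Fin 2) ℂ) (L : κ → Matrix (Fin 2) (Fin 2) ℂ) :
    (phiQ * krausMap (fun x : ι × κ => K x.1 ⊗ₖ L x.2) phiQ).trace
      = ∑ x : ι × κ, (K x.1 * (L x.2)ᵀ).trace * star (K x.1 * (L x.2)ᵀ).trace / 4 := by
  simp only [krausMap, Matrix.mul_sum, trace_sum, trace_phiQ_mul_kronecker_conj]

theorem trace_phiQ_mul_krausMap_gadcKraus_kronecker (γ N : ℝ) (hγ : γ ∈ Set.Icc (0 : ℝ) 1)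
    (hN : N ∈ Set.Icc (0 : ℝ) 1) :
    (phiQ * krausMap (fun x : Fin 4 × Fin 4 => gadcKraus γ N x.1 ⊗ₖ gadcKraus γ N x.2)
      phiQ).trace = ((1 + (γ / 2) * (γ - 2 * (1 + γ * N * (1 - N))) : ℝ) : ℂ) := by
  obtain ⟨hγ0, hγ1⟩ := hγ
  obtain ⟨hN0, hN1⟩ := hN
  have sqrt_pow_four : ∀ x : ℝ, 0 ≤ x → √x ^ 4 = x ^ 2 := fun x hx => by
    rw [show 4 = 2 * 2 from rfl, pow_mul, Real.sq_sqrt hx]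
  rw [trace_phiQ_mul_krausMap_kronecker]
  simp only [trace, gadcKraus, ketbra, single, Fin.isValue, smul_of, Complex.coe_smul, of_add_of,
    smul_add, diag_apply, Matrix.mul_apply, transpose_apply, Fin.sum_univ_two, star_add, star_mul',
    RCLike.star_def, Fintype.sum_prod_type, Fin.sum_univ_four, cons_val_zero, of_apply,
    Pi.add_apply, Pi.smul_apply, true_and, one_ne_zero, false_and, ↓reduceIte, Complex.real_smul,
    mul_one, smul_zero, add_zero, zero_ne_one, mul_zero, zero_add, Complex.conj_ofReal, map_zero,
    map_mul, cons_val_one, cons_val, zero_mul, zero_div, Complex.ofReal_add, Complex.ofReal_one,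
    Complex.ofReal_mul, Complex.ofReal_div, Complex.ofReal_ofNat, Complex.ofReal_sub]
  norm_cast
  ring_nf
  rw [Real.sq_sqrt hN0, Real.sq_sqrt (by linarith), Real.sq_sqrt (by linarith),
    sqrt_pow_four _ hN0, sqrt_pow_four _ (by linarith), sqrt_pow_four _ (by linarith),
    sqrt_pow_four _ (by nlinarith), sqrt_pow_four _ (by positivity)]
  push_cast
  ring

/-- the overlap of `Φ ⊗ Φ` with its image under four independent copies of
the generalized amplitude damping channel. -/
theorem stmt18 (γ N : ℝ) (hγ : γ ∈ Set.Icc (0 : ℝ) 1) (hN : N ∈ Set.Icc (0 : ℝ) 1) :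
    (phiPhi * gadc4 γ N phiPhi).trace
      = (((1 + (γ / 2) * (γ - 2 * (1 + γ * N * (1 - N)))) ^ 2 : ℝ) : ℂ) := by
  rw [gadc4_phiPhi, phiPhi_eq_submatrix_kronecker, submatrix_mul_equiv, trace_submatrix_equiv,
    ← mul_kronecker_mul, trace_kronecker, trace_phiQ_mul_krausMap_gadcKraus_kronecker γ N hγ hN]
  push_cast
  ring

end
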